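/- arXiv:1903.01093 — 3 statements merged into one kernel-verified Lean document; each statement's English description precedes it below -/
import Mathlib

section
/- Every causal function f : A^ℕ → B^ℕ (with A nonempty) arises from a stateful morphism sequence: there exist state sets S_n = A^n (lists of length n), an initial state, and transition functions φ_n : S_n × A → S_{n+1} × B such that the induced recurrently defined function equals f. Concretely, take φ_n (x, a) = ((x, a), (f (extend (x, a)))_n), where extend pads a finite sequence with a fixed element ⊥ ∈ A. -/
def Causal {A B : Type*} (f : (ℕ → A) → (ℕ → B)) : Prop :=
  ∀ x y : ℕ → A, ∀ n : ℕ, (∀ i ≤ n, x i = y i) → ∀ i ≤ n, f x i = f y i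

def states {A B : Type*} {S : ℕ → Type*} (i : S 0)
    (φ : ∀ n, S n × A → S (n + 1) × B) (x : ℕ → A) : ∀ n, S n
  | 0 => i
  | n + 1 => (φ n (states i φ x n, x n)).1

def induced {A B : Type*} {S : ℕ → Type*} (i : S 0)
    (φ : ∀ n, S n × A → S (n + 1) × B) (x : ℕ → A) (n : ℕ) : B :=
  (φ n (states i φ x n, x n)).2


def extend {A : Type*} (bot : A) {n : ℕ} (x : Fin n → A) : ℕ → A :=
  fun k => if h : k < n then x ⟨k, h⟩ else bot

theorem causal_from_stateful {A B : Type*} [Nonempty A] (bot : A)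
    (f : (ℕ → A) → (ℕ → B)) (hf : Causal f) :
    induced (S := fun n => Fin n → A) (i := Fin.elim0)
      (fun n (p : (Fin n → A) × A) =>
        (Fin.snoc p.1 p.2, f (extend bot (Fin.snoc p.1 p.2 : Fin (n + 1) → A)) n))
      = f := by
  set φ : ∀ n, (Fin n → A) × A → (Fin (n + 1) → A) × B :=
    (fun n (p : (Fin n → A) × A) =>
        (Fin.snoc p.1 p.2, f (extend bot (Fin.snoc p.1 p.2 : Fin (n + 1) → A)) n)) with hφ
  have hstates : ∀ (x : ℕ → A) (n : ℕ),
      states (S := fun n => Fin n → A) Fin.elim0 φ x n = fun k : Fin n => x k := by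
    intro x n
    induction n with
    | zero => funext k; exact k.elim0
    | succ n ih =>
      funext k
      show (φ n (states Fin.elim0 φ x n, x n)).1 k = x k
      rw [hφ, ih]
      refine Fin.lastCases ?_ (fun j => ?_) k
      · simp [Fin.snoc_last]
      · simp [Fin.snoc_castSucc]
  funext x n
  show (φ n (states Fin.elim0 φ x n, x n)).2 = f x n
  rw [hstates, hφ]
  refine hf _ x n (fun i hi => ?_) n le_rfl
  have h : i < n + 1 := Nat.lt_succ_of_le hi
  have hsnoc : (Fin.snoc (fun k : Fin n => x k) (x n) : Fin (n + 1) → A) = fun k : Fin (n + 1) => x k := by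
    funext k
    refine Fin.lastCases ?_ (fun j => ?_) k <;> simp [Fin.snoc_last, Fin.snoc_castSucc]
  simp only [extend, dif_pos h, hsnoc]
end

section
/- Vanishing for delayed trace: tracing first along state family U and then along state family V is the same as tracing once along the product family V × U, with paired initial state. Concretely, for φ_n : (V_n × U_n) × A → (V_{n+1} × U_{n+1}) × B, with initial states q ∈ V_0, p ∈ U_0, the causal function induced by the stateful sequence with state V_n × U_n, initial state (q, p), and transition φ_n equals the one obtained by first forming the stateful sequence on states U with values V × A → V × B and then tracing along V. -/
/-- Vanishing for delayed trace: tracing along `U` then along `V` equals tracing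
once along the product family `V × U`. -/
theorem delayed_trace_vanishing {A B : Type*} {V U : ℕ → Type*}
    (φ : ∀ n, (V n × U n) × A → (V (n + 1) × U (n + 1)) × B)
    (q : V 0) (p : U 0) :
    -- first form the stateful sequence on states `U` with values `V × A → V × B`:
    -- ψ n (u, (v, a)) = (u', (v', b)) where ((v', u'), b) = φ n ((v, u), a),
    -- then trace it along `V` with initial `q`, giving states `U n × V n`
    induced (S := fun n => U n × V n) (p, q)
      (fun n (r : (U n × V n) × A) =>
        let out := φ n ((r.1.2, r.1.1), r.2)
        ((out.1.2, out.1.1), out.2))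
      = induced (S := fun n => V n × U n) (q, p) φ := by
  funext x n
  have key : ∀ n, states (S := fun n => U n × V n) (p, q)
      (fun n (r : (U n × V n) × A) =>
        let out := φ n ((r.1.2, r.1.1), r.2)
        ((out.1.2, out.1.1), out.2)) x n
      = Prod.swap (states (S := fun n => V n × U n) (q, p) φ x n) := by
    intro n
    induction n with
    | zero => rfl
    | succ k ih => simp [states, ih, Prod.swap]
  simp [induced, key]
end

section
/- Every stateful causal function equals the delayed trace of a stateless sequence: the causal function Φ induced by states S, initial state i, and transitions φ_n : S_n × A → S_{n+1} × B equals the causal function obtained by applying the delayed trace along S with initial state i to the stateless (memoryless) sequence whose n-th component is the pure function φ_n viewed as acting on values of type S_n × A. -/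
lemma states_aux {A B : Type*} {S : ℕ → Type*} (i : S 0)
    (φ : ∀ n, S n × A → S (n + 1) × B) (x : ℕ → A) (n : ℕ) :
    states (S := fun n => PUnit × S n) (PUnit.unit, i)
      (fun n (r : (PUnit × S n) × A) =>
        let out := φ n (r.1.2, r.2)
        ((PUnit.unit, out.1), out.2)) x n = (PUnit.unit, states i φ x n) := by
  induction n with
  | zero => rfl
  | succ n ih => simp [states, ih]

/-- Every stateful causal function equals the delayed trace along `S` of the
stateless sequence whose components are the pure functions `φ n`. -/
theorem trace_of_stateless {A B : Type*} {S : ℕ → Type*} (i : S 0)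
    (φ : ∀ n, S n × A → S (n + 1) × B) :
    induced (S := fun n => PUnit × S n) (PUnit.unit, i)
      (fun n (r : (PUnit × S n) × A) =>
        let out := φ n (r.1.2, r.2)
        ((PUnit.unit, out.1), out.2))
      = induced i φ := by
  funext x n
  simp [induced, states_aux]
end
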